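/- arXiv:2008.03133 — 4 statements merged into one kernel-verified Lean document; each statement's English description precedes it below -/
import Mathlib

section
/- For every global variable f : Ω → ℝ̄ and every situation s: E_V(f|s) = inf{ M(s) : M ∈ 𝕄_b such that the event {ω ∈ Ω : liminf_{n→∞} M(ω^n) ≥ f(ω)} is strictly almost sure within Γ(s) }. -/
open Filter Topology

noncomputable section

/-- Addition on the extended reals with the convention `(+∞) + (−∞) = (−∞) + (+∞) = +∞`. -/
def eadd (a b : EReal) : EReal := if a = ⊤ ∨ b = ⊤ then ⊤ else a + b

/-- An extended real variable is bounded below. -/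
def BddBelowF {Y : Type*} (f : Y → EReal) : Prop := ∃ M : ℝ, ∀ y, (M : EReal) ≤ f y

/-- (E1): constants are preserved. -/
def UE1 {Y : Type*} (E : (Y → EReal) → EReal) : Prop :=
  ∀ c : ℝ, E (fun _ => (c : EReal)) = (c : EReal)

/-- (E2): sub-additivity on bounded below variables. -/
def UE2 {Y : Type*} (E : (Y → EReal) → EReal) : Prop :=
  ∀ f g : Y → EReal, BddBelowF f → BddBelowF g →
    E (fun y => eadd (f y) (g y)) ≤ eadd (E f) (E g)

/-- (E3): positive homogeneity on bounded below variables. -/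
def UE3 {Y : Type*} (E : (Y → EReal) → EReal) : Prop :=
  ∀ l : ℝ, 0 < l → ∀ f : Y → EReal, BddBelowF f →
    E (fun y => (l : EReal) * f y) = (l : EReal) * E f

/-- (E4): monotonicity on bounded below variables. -/
def UE4 {Y : Type*} (E : (Y → EReal) → EReal) : Prop :=
  ∀ f g : Y → EReal, BddBelowF f → BddBelowF g → (∀ y, f y ≤ g y) → E f ≤ E g

/-- (E5): continuity with respect to non-decreasing sequences of non-negative variables. -/
def UE5 {Y : Type*} (E : (Y → EReal) → EReal) : Prop :=
  ∀ (fs : ℕ → Y → EReal) (f : Y → EReal),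
    (∀ n y, 0 ≤ fs n y) → (∀ n y, fs n y ≤ fs (n + 1) y) →
    (∀ y, Tendsto (fun n => fs n y) atTop (𝓝 (f y))) →
    Tendsto (fun n => E (fs n)) atTop (𝓝 (E f))

/-- An upper expectation: a map satisfying (E1)–(E5). -/
def IsUpperExpectation {Y : Type*} (E : (Y → EReal) → EReal) : Prop :=
  UE1 E ∧ UE2 E ∧ UE3 E ∧ UE4 E ∧ UE5 E

/-- The situation formed by the first `n` states of the path `ω`. -/
def pfx {X : Type*} (ω : ℕ → X) (n : ℕ) : List X := List.ofFn (fun i : Fin n => ω i)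

/-- The cylinder event of all paths that go through the situation `s`. -/
def Gamma {X : Type*} (s : List X) : Set (ℕ → X) := {ω | pfx ω s.length = s}

/-- A process is bounded below. -/
def BddBelowP {X : Type*} (M : List X → EReal) : Prop := ∃ B : ℝ, ∀ t, (B : EReal) ≤ M t

/-- A supermartingale for the imprecise probabilities tree `Q`. -/
def IsSupermartingale {X : Type*} (Q : List X → (X → EReal) → EReal)
    (M : List X → EReal) : Prop :=
  ∀ s : List X, Q s (fun x => M (s ++ [x])) ≤ M s

/-- The pathwise limit inferior of a process. -/
def liminfP {X : Type*} (M : List X → EReal) (ω : ℕ → X) : EReal :=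
  Filter.liminf (fun n => M (pfx ω n)) atTop

/-- The game-theoretic upper expectation `E_V(f | s)`. -/
def upExp {X : Type*} (Q : List X → (X → EReal) → EReal)
    (f : (ℕ → X) → EReal) (s : List X) : EReal :=
  sInf {x : EReal | ∃ M : List X → EReal, IsSupermartingale Q M ∧ BddBelowP M ∧
    (∀ ω ∈ Gamma s, f ω ≤ liminfP M ω) ∧ M s = x}

/-- An event `A` is strictly almost sure within `Γ(s)`: some `s`-test supermartingale
converges to `+∞` on every path of `Γ(s)` outside `A`. -/
def StrictlyAS {X : Type*} (Q : List X → (X → EReal) → EReal) (s : List X)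
    (A : Set (ℕ → X)) : Prop :=
  ∃ T : List X → EReal, IsSupermartingale Q T ∧ (∀ t, 0 ≤ T t) ∧ T s = 1 ∧
    ∀ ω ∈ Gamma s, ω ∉ A → Tendsto (fun n => T (pfx ω n)) atTop (𝓝 (⊤ : EReal))

/-- An `n`-measurable global variable only depends on the first `n` states. -/
def NMeasurable {X : Type*} (n : ℕ) (f : (ℕ → X) → EReal) : Prop :=
  ∀ ω ω' : ℕ → X, pfx ω n = pfx ω' n → f ω = f ω'

/-- A finitary global variable is `n`-measurable for some `n`. -/
def Finitary {X : Type*} (f : (ℕ → X) → EReal) : Prop := ∃ n : ℕ, NMeasurable n f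

/-- The bounded below global variables that are pointwise limits of finitary variables. -/
def VbLim {X : Type*} : Set ((ℕ → X) → EReal) :=
  {f | BddBelowF f ∧ ∃ gs : ℕ → (ℕ → X) → EReal, (∀ n, Finitary (gs n)) ∧
    ∀ ω, Tendsto (fun n => gs n ω) atTop (𝓝 (f ω))}


/-- `eadd` agrees with `+` when neither argument is `⊥`. -/
lemma eadd_eq_add' {a b : EReal} (ha : a ≠ ⊥) (hb : b ≠ ⊥) : eadd a b = a + b := by
  unfold eadd
  split_ifs with h
  · rcases h with h | h
    · rw [h, EReal.top_add_of_ne_bot hb]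
    · rw [h, EReal.add_top_of_ne_bot ha]
  · rfl

lemma eadd_le_eadd' {a b c d : EReal} (h1 : a ≤ c) (h2 : b ≤ d) : eadd a b ≤ eadd c d := by
  unfold eadd
  split_ifs with h h'
  · exact le_refl _
  · exfalso
    rcases h with h | h
    · exact h' (Or.inl (top_le_iff.1 (h ▸ h1)))
    · exact h' (Or.inr (top_le_iff.1 (h ▸ h2)))
  · exact le_top
  · exact add_le_add h1 h2

lemma le_of_forall_le_add_eps {a b : EReal} (hb : b ≠ ⊥)
    (h : ∀ ε : ℝ, 0 < ε → a ≤ b + (ε : EReal)) : a ≤ b := by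
  by_contra hcon
  push_neg at hcon
  induction b with
  | bot => exact hb rfl
  | coe y =>
      induction a with
      | bot => exact absurd hcon (by simp)
      | coe x =>
          have hxy : y < x := by exact_mod_cast hcon
          have h1 := h ((x - y) / 2) (by linarith)
          rw [← EReal.coe_add, EReal.coe_le_coe_iff] at h1
          linarith
      | top =>
          have h1 := h 1 one_pos
          rw [← EReal.coe_add, top_le_iff] at h1
          exact EReal.coe_ne_top _ h1
  | top => exact absurd hcon (by simp)

/-- in the definition of `E_V(f|s)`, the requirement `liminf M ≥_s f` may be
weakened to holding strictly almost surely within `Γ(s)`. -/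
theorem stmt12 {X : Type*} [Fintype X] [Nonempty X]
    (Q : List X → (X → EReal) → EReal) (hQ : ∀ s : List X, IsUpperExpectation (Q s))
    (f : (ℕ → X) → EReal) (s : List X) :
    upExp Q f s =
      sInf {x : EReal | ∃ M : List X → EReal, IsSupermartingale Q M ∧ BddBelowP M ∧
        StrictlyAS Q s {ω | f ω ≤ liminfP M ω} ∧ M s = x} := by
  apply le_antisymm
  · -- hard direction: upExp ≤ sInf of the weaker set
    apply le_sInf
    rintro x ⟨M, hM, ⟨B, hB⟩, ⟨T, hT, hT0, hTs, hTdiv⟩, rfl⟩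
    have hMbot : ∀ t, M t ≠ ⊥ := fun t => fun h => by
      simpa [h] using hB t
    have hMs : M s ≠ ⊥ := hMbot s
    apply le_of_forall_le_add_eps hMs
    intro ε hε
    -- the perturbed supermartingale
    set N : List X → EReal := fun t => M t + (ε : EReal) * T t with hN
    have hεT0 : ∀ t, (0 : EReal) ≤ (ε : EReal) * T t := fun t =>
      mul_nonneg (by exact_mod_cast hε.le) (hT0 t)
    have hNbot : ∀ t, M t ≤ N t := fun t => le_add_of_nonneg_right (hεT0 t)
    have hNB : ∀ t, (B : EReal) ≤ N t := fun t => (hB t).trans (hNbot t)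
    have hNsuper : IsSupermartingale Q N := by
      intro t
      obtain ⟨hE1, hE2, hE3, hE4, hE5⟩ := hQ t
      have heq : (fun x => N (t ++ [x])) =
          fun x => eadd (M (t ++ [x])) ((ε : EReal) * T (t ++ [x])) := by
        funext x
        rw [eadd_eq_add' (hMbot _) (fun h => by simpa [h] using hεT0 (t ++ [x]))]
      have hbM : BddBelowF (fun x => M (t ++ [x])) := ⟨B, fun x => hB _⟩
      have hbT : BddBelowF (fun x => T (t ++ [x])) := ⟨0, fun x => by
        simpa using hT0 _⟩
      have hbεT : BddBelowF (fun x => (ε : EReal) * T (t ++ [x])) := ⟨0, fun x => by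
        simpa using hεT0 _⟩
      calc Q t (fun x => N (t ++ [x]))
          = Q t (fun x => eadd (M (t ++ [x])) ((ε : EReal) * T (t ++ [x]))) := by rw [heq]
        _ ≤ eadd (Q t (fun x => M (t ++ [x])))
              (Q t (fun x => (ε : EReal) * T (t ++ [x]))) := hE2 _ _ hbM hbεT
        _ = eadd (Q t (fun x => M (t ++ [x])))
              ((ε : EReal) * Q t (fun x => T (t ++ [x]))) := by rw [hE3 ε hε _ hbT]
        _ ≤ eadd (M t) ((ε : EReal) * T t) := by
              exact eadd_le_eadd' (hM t)
                (mul_le_mul_of_nonneg_left (hT t) (by exact_mod_cast hε.le))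
        _ = M t + (ε : EReal) * T t := eadd_eq_add' (hMbot t)
              (fun h => by simpa [h] using hεT0 t)
    have hNlim : ∀ ω ∈ Gamma s, f ω ≤ liminfP N ω := by
      intro ω hω
      by_cases hωA : f ω ≤ liminfP M ω
      · exact hωA.trans (liminf_le_liminf (Eventually.of_forall fun n => hNbot _))
      · have hdiv := hTdiv ω hω hωA
        have htop : liminfP N ω = ⊤ := by
          rw [eq_top_iff]
          by_contra hlt
          push_neg at hlt
          rcases EReal.lt_iff_exists_real_btwn.1 hlt with ⟨r, hr1, _⟩
          have : (r : EReal) ≤ liminfP N ω := by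
            apply le_liminf_of_le (by isBoundedDefault)
            have hev : ∀ᶠ n in atTop,
                (((r - B) / ε : ℝ) : EReal) < T (pfx ω n) :=
              hdiv.eventually (eventually_gt_nhds (EReal.coe_lt_top _))
            filter_upwards [hev] with n hn
            have h1 : ((r - B : ℝ) : EReal) ≤ (ε : EReal) * T (pfx ω n) := by
              have := mul_le_mul_of_nonneg_left hn.le
                (show (0 : EReal) ≤ (ε : EReal) by exact_mod_cast hε.le)
              calc ((r - B : ℝ) : EReal) = (ε : EReal) * (((r - B) / ε : ℝ) : EReal) := by
                    rw [← EReal.coe_mul]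
                    congr 1
                    field_simp
                _ ≤ (ε : EReal) * T (pfx ω n) := this
            calc (r : EReal) = (B : EReal) + ((r - B : ℝ) : EReal) := by
                  rw [← EReal.coe_add]; norm_num
              _ ≤ M (pfx ω n) + (ε : EReal) * T (pfx ω n) := add_le_add (hB _) h1
          exact (this.trans_lt hr1).false
        rw [htop]
        exact le_top
    have hmem : N s ∈ {x : EReal | ∃ M : List X → EReal, IsSupermartingale Q M ∧
        BddBelowP M ∧ (∀ ω ∈ Gamma s, f ω ≤ liminfP M ω) ∧ M s = x} :=
      ⟨N, hNsuper, ⟨B, hNB⟩, hNlim, rfl⟩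
    have : upExp Q f s ≤ N s := sInf_le hmem
    calc upExp Q f s ≤ N s := this
      _ = M s + (ε : EReal) := by rw [hN]; simp [hTs]
  · -- easy direction
    apply sInf_le_sInf
    rintro x ⟨M, hM, hMb, hMlim, rfl⟩
    refine ⟨M, hM, hMb, ⟨fun _ => 1, ?_, fun _ => zero_le_one, rfl, ?_⟩, rfl⟩
    · intro t
      have h1 := (hQ t).1 1
      simp only [EReal.coe_one] at h1
      exact le_of_eq h1
    · intro ω hω hωA
      exact absurd (hMlim ω hω) hωA
end
end

section
/- Continuity with respect to lower cuts: for every global variable f : Ω → ℝ̄ and every situation s, E_V(f|s) = lim_{c→−∞} E_V(f^{∨c} | s), where for real c, f^{∨c} := max(f, c) pointwise (the limit exists since E_V(f^{∨c}|s) is non-decreasing in c). -/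
open Filter Topology

noncomputable section

/-- continuity of `E_V(·|s)` with respect to lower cuts:
`E_V(f|s) = lim_{c→−∞} E_V(f ∨ c | s)`. -/
theorem stmt15 {X : Type*} [Fintype X] [Nonempty X]
    (Q : List X → (X → EReal) → EReal) (hQ : ∀ s : List X, IsUpperExpectation (Q s))
    (f : (ℕ → X) → EReal) (s : List X) :
    Tendsto (fun c : ℝ => upExp Q (fun ω => max (f ω) (c : EReal)) s) atBot
      (𝓝 (upExp Q f s)) := by
  have hmono : Monotone (fun c : ℝ => upExp Q (fun ω => max (f ω) (c : EReal)) s) := by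
    intro c c' hcc
    apply sInf_le_sInf
    rintro x ⟨M, hM, hMb, hMf, hMs⟩
    exact ⟨M, hM, hMb, fun ω hω => le_trans (max_le_max le_rfl (by exact_mod_cast hcc)) (hMf ω hω), hMs⟩
  have hinf : (⨅ c : ℝ, upExp Q (fun ω => max (f ω) (c : EReal)) s) = upExp Q f s := by
    apply le_antisymm
    · apply le_sInf
      rintro x ⟨M, hM, ⟨B, hMb⟩, hMf, hMs⟩
      refine iInf_le_of_le B ?_
      rw [← hMs]
      apply sInf_le
      refine ⟨M, hM, ⟨B, hMb⟩, fun ω hω => ?_, rfl⟩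
      refine max_le (hMf ω hω) ?_
      exact Filter.le_liminf_of_le (by isBoundedDefault)
        (Filter.Eventually.of_forall fun n => hMb _)
    · refine le_iInf fun c => sInf_le_sInf ?_
      rintro x ⟨M, hM, hMb, hMf, hMs⟩
      exact ⟨M, hM, hMb, fun ω hω => le_trans (le_max_left _ _) (hMf ω hω), hMs⟩
  rw [← hinf]
  exact tendsto_atBot_iInf hmono
end
end

section
/- Downward continuity for finitary variables: for every situation s and every pointwise non-increasing sequence (f_n)_{n∈ℕ} of finitary global variables f_n : Ω → ℝ̄, each bounded above by some real constant, that converges pointwise to a global variable f : Ω → ℝ̄, one has lim_{n→∞} E_V(f_n|s) = E_V(f|s). -/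
open Filter Topology

noncomputable section

/-!
`E_V(· | s)` is monotone, so `E_V(f_n | s)` decreases to a limit at least `E_V(f | s)`.
Conversely, take a bounded below supermartingale `M` with `liminf M ≥ f` on `Γ(s)` and `ε > 0`.
As `f_n ↓ f < +∞`, every path through `s` passes a situation `u` such that `f_n ≤ M(u) + ε`
on all of `Γ(u)` for all large `n`. By compactness finitely many such `u` cover `Γ(s)`, so a
single `n` serves all of them. The supermartingale that follows `M + ε` until one of these `u`
is reached, and from then on the finite-horizon backward induction of the finitary `f_n`,
dominates `f_n` on `Γ(s)` and starts at most at `M(s) + ε`.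
-/

lemma eadd_coe (a : EReal) (r : ℝ) : eadd a r = a + r := by
  simp only [eadd, EReal.coe_ne_top, or_false]
  split_ifs with h <;> simp [h]

lemma EReal.le_of_forall_pos_le_add {a b : EReal} (h : ∀ ε : ℝ, 0 < ε → a ≤ b + ε) : a ≤ b := by
  induction b with
  | bot => simpa using h 1 one_pos
  | top => exact le_top
  | coe r =>
    refine EReal.le_of_forall_lt_iff_le.1 fun z hz => ?_
    have hrz : r < z := EReal.coe_lt_coe_iff.1 hz
    have := h (z - r) (by linarith)
    rwa [← EReal.coe_add, add_sub_cancel] at this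

lemma EReal.exists_frequently_le_add {a b : ℕ → EReal} {l : EReal} {B ε : ℝ}
    (ha : Tendsto a atTop (𝓝 l)) (hl : l ≠ ⊤) (hlb : l ≤ liminf b atTop)
    (hB : ∀ k, (B : EReal) ≤ b k) (hε : 0 < ε) : ∃ n, ∃ᶠ k in atTop, a n ≤ b k + ε := by
  induction l with
  | bot =>
    obtain ⟨n, hn⟩ := (ha.eventually_lt_const (EReal.bot_lt_coe B)).exists
    exact ⟨n, Frequently.of_forall fun k =>
      hn.le.trans ((hB k).trans (le_add_of_nonneg_right (by exact_mod_cast hε.le)))⟩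
  | top => exact absurd rfl hl
  | coe r =>
    obtain ⟨n, hn⟩ := (ha.eventually_lt_const
      (EReal.coe_lt_coe_iff.2 (by linarith : r < r + ε / 2))).exists
    have hb : ∀ᶠ k in atTop, ((r - ε / 2 : ℝ) : EReal) < b k :=
      eventually_lt_of_lt_liminf ((EReal.coe_lt_coe_iff.2 (by linarith)).trans_le hlb)
    refine ⟨n, hb.frequently.mono fun k hk => ?_⟩
    calc a n ≤ ((r - ε / 2 : ℝ) : EReal) + ε := by
          rw [← EReal.coe_add]; exact hn.le.trans_eq (by ring_nf)
      _ ≤ b k + ε := by gcongr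

section Cylinders

variable {X : Type*}

@[simp]
lemma pfx_length (ω : ℕ → X) (n : ℕ) : (pfx ω n).length = n := by simp [pfx]

lemma pfx_take (ω : ℕ → X) {j k : ℕ} (h : j ≤ k) : (pfx ω k).take j = pfx ω j := by
  apply List.ext_getElem <;> simp [pfx, h]

lemma mem_Gamma_of_prefix {ω : ℕ → X} {u : List X} {k : ℕ} (h : u <+: pfx ω k) :
    ω ∈ Gamma u := by
  have hk : u.length ≤ k := by simpa using h.length_le
  show pfx ω u.length = u
  rw [← pfx_take ω hk, ← List.prefix_iff_eq_take.1 h]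

lemma prefix_pfx_of_mem_Gamma {ω : ℕ → X} {u : List X} (hω : ω ∈ Gamma u) {k : ℕ}
    (hk : u.length ≤ k) : u <+: pfx ω k := by
  have := List.take_prefix u.length (pfx ω k)
  rwa [pfx_take ω hk, (hω : pfx ω u.length = u)] at this

lemma mem_Gamma_pfx (ω : ℕ → X) (k : ℕ) : ω ∈ Gamma (pfx ω k) :=
  mem_Gamma_of_prefix List.prefix_rfl

lemma Gamma_anti {u t : List X} (h : u <+: t) : Gamma t ⊆ Gamma u := fun _ hω =>
  mem_Gamma_of_prefix (h.trans (prefix_pfx_of_mem_Gamma hω le_rfl))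

lemma pfx_eq_take_of_mem_Gamma {ω : ℕ → X} {u : List X} (hω : ω ∈ Gamma u) {j : ℕ}
    (h : j ≤ u.length) : pfx ω j = u.take j := by
  rw [← pfx_take ω h, (hω : pfx ω u.length = u)]

lemma NMeasurable.eq_of_mem_Gamma {n : ℕ} {f : (ℕ → X) → EReal} (hf : NMeasurable n f)
    {u : List X} (hn : n ≤ u.length) {ω ω' : ℕ → X} (hω : ω ∈ Gamma u) (hω' : ω' ∈ Gamma u) :
    f ω = f ω' :=
  hf ω ω' (by rw [pfx_eq_take_of_mem_Gamma hω hn, pfx_eq_take_of_mem_Gamma hω' hn])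

def extPath [Nonempty X] (u : List X) : ℕ → X := fun i => u.getD i (Classical.arbitrary X)

lemma extPath_mem_Gamma [Nonempty X] (u : List X) : extPath u ∈ Gamma u := by
  apply List.ext_getElem <;> simp +contextual [pfx, extPath]

lemma isClopen_Gamma [TopologicalSpace X] [DiscreteTopology X] (u : List X) :
    IsClopen (Gamma u) :=
  (isClopen_discrete {v : Fin u.length → X | List.ofFn v = u}).preimage
    (continuous_pi fun i => continuous_apply (i : ℕ))

/-- König's lemma, via compactness of `Γ(s)` in the product of discrete topologies. -/
lemma exists_finite_cover_Gamma [Finite X] {P : List X → Prop} {s : List X}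
    (h : ∀ ω ∈ Gamma s, ∃ k, P (pfx ω k)) :
    ∃ T : Set (List X), T.Finite ∧ (∀ u ∈ T, P u) ∧ Gamma s ⊆ ⋃ u ∈ T, Gamma u := by
  let _ : TopologicalSpace X := ⊥
  have : DiscreteTopology X := ⟨rfl⟩
  have hcover : Gamma s ⊆ ⋃ u ∈ {u | P u}, Gamma u := fun ω hω => by
    obtain ⟨k, hk⟩ := h ω hω
    exact Set.mem_biUnion hk (mem_Gamma_pfx ω k)
  obtain ⟨T, hTP, hT, hcover⟩ := (isClopen_Gamma s).isClosed.isCompact.elim_finite_subcover_image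
    (fun u _ => (isClopen_Gamma u).isOpen) hcover
  exact ⟨T, hT, hTP, hcover⟩

end Cylinders

namespace IsUpperExpectation

variable {Y : Type*} {E : (Y → EReal) → EReal}

lemma le_apply (hE : IsUpperExpectation E) {f : Y → EReal} {L : ℝ} (hf : ∀ y, L ≤ f y) :
    L ≤ E f :=
  calc (L : EReal) = E (fun _ => L) := (hE.1 L).symm
    _ ≤ E f := hE.2.2.2.1 _ _ ⟨L, fun _ => le_rfl⟩ ⟨L, hf⟩ hf

lemma apply_le (hE : IsUpperExpectation E) {f : Y → EReal} {L : ℝ} {r : EReal}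
    (hf : ∀ y, L ≤ f y) (hLr : L ≤ r) (hfr : ∀ y, f y ≤ r) : E f ≤ r := by
  induction r with
  | bot => exact absurd hLr (by simp)
  | top => exact le_top
  | coe r =>
    calc E f ≤ E (fun _ => r) := hE.2.2.2.1 _ _ ⟨L, hf⟩ ⟨L, fun _ => hLr⟩ hfr
      _ = r := hE.1 r

end IsUpperExpectation

section Supermartingales

variable {X : Type*} {Q : List X → (X → EReal) → EReal}

lemma upExp_mono {f g : (ℕ → X) → EReal} (hfg : ∀ ω, f ω ≤ g ω) (s : List X) :
    upExp Q f s ≤ upExp Q g s :=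
  sInf_le_sInf fun _ ⟨M, hM, hMb, hdom, hMs⟩ =>
    ⟨M, hM, hMb, fun ω hω => (hfg ω).trans (hdom ω hω), hMs⟩

lemma upExp_le {f : (ℕ → X) → EReal} {s : List X} {M : List X → EReal}
    (hM : IsSupermartingale Q M) (hMb : BddBelowP M) (hdom : ∀ ω ∈ Gamma s, f ω ≤ liminfP M ω) :
    upExp Q f s ≤ M s :=
  sInf_le ⟨M, hM, hMb, hdom, rfl⟩

lemma IsSupermartingale.add_const (hQ : ∀ s, IsUpperExpectation (Q s)) {M : List X → EReal}
    (hM : IsSupermartingale Q M) {B : ℝ} (hB : ∀ t, B ≤ M t) (c : ℝ) :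
    IsSupermartingale Q (fun t => M t + c) := fun t =>
  calc Q t (fun x => M (t ++ [x]) + c) = Q t (fun x => eadd (M (t ++ [x])) c) := by
        simp only [eadd_coe]
    _ ≤ eadd (Q t (fun x => M (t ++ [x]))) (Q t fun _ => c) :=
        (hQ t).2.1 _ _ ⟨B, fun _ => hB _⟩ ⟨c, fun _ => le_rfl⟩
    _ = Q t (fun x => M (t ++ [x])) + c := by rw [(hQ t).1, eadd_coe]
    _ ≤ M t + c := by gcongr; exact hM t

end Supermartingales

section Backward

variable {X : Type*} {Q : List X → (X → EReal) → EReal}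

def backwardRec (Q : List X → (X → EReal) → EReal) (g : List X → EReal) :
    ℕ → List X → EReal
  | 0 => g
  | k + 1 => fun t => Q t (fun x => backwardRec Q g k (t ++ [x]))

/-- Backward induction from the terminal values `g` at horizon `m`; the truncated subtraction
makes it equal to `g` beyond the horizon. -/
def backwardProc (Q : List X → (X → EReal) → EReal) (g : List X → EReal) (m : ℕ)
    (t : List X) : EReal :=
  backwardRec Q g (m - t.length) t

lemma backwardProc_of_le {m : ℕ} {t : List X} (h : m ≤ t.length) :
    backwardProc Q g m t = g t := by
  simp [backwardProc, Nat.sub_eq_zero_of_le h, backwardRec]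

lemma backwardProc_of_lt {m : ℕ} {t : List X} (h : t.length < m) :
    backwardProc Q g m t = Q t (fun x => backwardProc Q g m (t ++ [x])) := by
  obtain ⟨k, hk⟩ : ∃ k, m - t.length = k + 1 := ⟨m - t.length - 1, by omega⟩
  simp only [backwardProc, hk, backwardRec, List.length_append, List.length_singleton]
  congr! 3
  omega

variable (hQ : ∀ s, IsUpperExpectation (Q s)) {g : List X → EReal} {L : ℝ}
  (hg : ∀ t, L ≤ g t)
include hQ hg

lemma le_backwardRec (k : ℕ) (t : List X) : L ≤ backwardRec Q g k t := by
  induction k generalizing t with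
  | zero => exact hg t
  | succ k ih => exact (hQ t).le_apply fun x => ih _

lemma backwardRec_le {r : EReal} (hLr : L ≤ r) (k : ℕ) (t : List X)
    (hgr : ∀ t', t <+: t' → g t' ≤ r) : backwardRec Q g k t ≤ r := by
  induction k generalizing t with
  | zero => exact hgr t List.prefix_rfl
  | succ k ih =>
    exact (hQ t).apply_le (fun x => le_backwardRec hQ hg k _) hLr fun x =>
      ih _ fun t' ht' => hgr t' ((List.prefix_append t [x]).trans ht')

lemma le_backwardProc (m : ℕ) (t : List X) : L ≤ backwardProc Q g m t :=
  le_backwardRec hQ hg _ t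

lemma backwardProc_le {r : EReal} (hLr : L ≤ r) (m : ℕ) {t : List X}
    (hgr : ∀ t', t <+: t' → g t' ≤ r) : backwardProc Q g m t ≤ r :=
  backwardRec_le hQ hg hLr _ t hgr

lemma backwardProc_isSupermartingale {m : ℕ}
    (hgm : ∀ t x, m ≤ t.length → g (t ++ [x]) = g t) :
    IsSupermartingale Q (backwardProc Q g m) := by
  intro t
  rcases lt_or_ge t.length m with ht | ht
  · exact (backwardProc_of_lt ht).ge
  · have hchild : ∀ x, backwardProc Q g m (t ++ [x]) = g t := fun x => by
      rw [backwardProc_of_le (by simp; omega), hgm t x ht]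
    simp only [hchild, backwardProc_of_le ht]
    exact (hQ t).apply_le (fun _ => hg t) (hg t) fun _ => le_rfl

end Backward

section Paste

variable {X : Type*} {Q : List X → (X → EReal) → EReal}

open Classical in
def paste (T : Set (List X)) (W V : List X → EReal) (t : List X) : EReal :=
  if ∃ u ∈ T, u <+: t then V t else W t

variable {T : Set (List X)} {W V : List X → EReal}

lemma paste_of_reached {t : List X} (h : ∃ u ∈ T, u <+: t) : paste T W V t = V t := if_pos h

lemma paste_of_not_reached {t : List X} (h : ¬∃ u ∈ T, u <+: t) : paste T W V t = W t :=
  if_neg h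

lemma le_paste {B : ℝ} (hW : ∀ t, B ≤ W t) (hV : ∀ t, B ≤ V t) (t : List X) :
    B ≤ paste T W V t := by
  unfold paste; split_ifs <;> simp only [hW, hV]

lemma paste_le_of_forall_prefix {s : List X} (hTs : ∀ u ∈ T, s <+: u)
    (hVW : ∀ u ∈ T, V u ≤ W u) : paste T W V s ≤ W s := by
  by_cases h : ∃ u ∈ T, u <+: s
  · obtain ⟨u, hu, hus⟩ := h
    obtain rfl : u = s := hus.eq_of_length (le_antisymm hus.length_le (hTs u hu).length_le)
    rw [paste_of_reached ⟨u, hu, hus⟩]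
    exact hVW u hu
  · exact (paste_of_not_reached h).le

lemma paste_isSupermartingale (hQ : ∀ s, IsUpperExpectation (Q s))
    (hWsm : IsSupermartingale Q W) (hVsm : IsSupermartingale Q V) {B : ℝ}
    (hW : ∀ t, B ≤ W t) (hV : ∀ t, B ≤ V t) (hVW : ∀ u ∈ T, V u ≤ W u) :
    IsSupermartingale Q (paste T W V) := by
  intro t
  by_cases ht : ∃ u ∈ T, u <+: t
  · have hchild : ∀ x, ∃ u ∈ T, u <+: t ++ [x] := fun x =>
      ht.imp fun u hu => ⟨hu.1, hu.2.trans (List.prefix_append t [x])⟩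
    simp only [paste_of_reached (hchild _), paste_of_reached ht]
    exact hVsm t
  · have hchild : ∀ x, paste T W V (t ++ [x]) ≤ W (t ++ [x]) := fun x => by
      by_cases h : ∃ u ∈ T, u <+: t ++ [x]
      · obtain ⟨u, hu, hux⟩ := h
        rcases List.prefix_concat_iff.1 hux with rfl | hut
        · rw [paste_of_reached ⟨_, hu, hux⟩]
          exact hVW _ hu
        · exact absurd ⟨u, hu, hut⟩ ht
      · exact (paste_of_not_reached h).le
    rw [paste_of_not_reached ht]
    exact ((hQ t).2.2.2.1 _ _ ⟨B, fun _ => le_paste hW hV _⟩ ⟨B, fun _ => hW _⟩ hchild).trans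
      (hWsm t)

end Paste

section DownwardContinuity

variable {X : Type*} {Q : List X → (X → EReal) → EReal}

lemma upExp_le_of_cover [Nonempty X] (hQ : ∀ s, IsUpperExpectation (Q s))
    {g : (ℕ → X) → EReal} {m : ℕ} (hg : NMeasurable m g)
    {W : List X → EReal} (hWsm : IsSupermartingale Q W) {B : ℝ} (hW : ∀ t, B ≤ W t)
    {s : List X} {T : Set (List X)} (hTs : ∀ u ∈ T, s <+: u)
    (hcover : Gamma s ⊆ ⋃ u ∈ T, Gamma u) (hgW : ∀ u ∈ T, ∀ ω ∈ Gamma u, g ω ≤ W u) :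
    upExp Q g s ≤ W s := by
  -- The witness follows `W` until `T` is reached, then the backward induction of `g`.
  set g₀ : List X → EReal := fun t => max (g (extPath t)) B
  have hg₀ : ∀ t, B ≤ g₀ t := fun t => le_max_right _ _
  have hVsm : IsSupermartingale Q (backwardProc Q g₀ m) :=
    backwardProc_isSupermartingale hQ hg₀ fun t x ht => by simp only [g₀, hg.eq_of_mem_Gamma ht
        (Gamma_anti (List.prefix_append t [x]) (extPath_mem_Gamma _)) (extPath_mem_Gamma t)]
  have hVW : ∀ u ∈ T, backwardProc Q g₀ m u ≤ W u := fun u hu =>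
    backwardProc_le hQ hg₀ (hW u) m fun t' ht' =>
      max_le (hgW u hu _ (Gamma_anti ht' (extPath_mem_Gamma t'))) (hW u)
  have hV : ∀ t, B ≤ backwardProc Q g₀ m t := le_backwardProc hQ hg₀ m
  refine (upExp_le (paste_isSupermartingale hQ hWsm hVsm hW hV hVW) ⟨B, le_paste hW hV⟩
    fun ω hω => ?_).trans (paste_le_of_forall_prefix hTs hVW)
  obtain ⟨u, hu, hωu⟩ := Set.mem_iUnion₂.1 (hcover hω)
  refine le_liminf_of_le (by isBoundedDefault) ?_
  filter_upwards [eventually_ge_atTop (max u.length m)] with k hk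
  rw [paste_of_reached ⟨u, hu, prefix_pfx_of_mem_Gamma hωu (le_of_max_le_left hk)⟩,
    backwardProc_of_le (by simpa using le_of_max_le_right hk)]
  calc g ω = g (extPath (pfx ω k)) := hg.eq_of_mem_Gamma (by simpa using le_of_max_le_right hk)
        (mem_Gamma_pfx ω k) (extPath_mem_Gamma _)
    _ ≤ g₀ (pfx ω k) := le_max_left _ _

variable {fs : ℕ → (ℕ → X) → EReal} {f : (ℕ → X) → EReal}

lemma exists_pfx_eventually_le_add (hfin : ∀ n, Finitary (fs n))
    (hanti : ∀ ω, Antitone (fun n => fs n ω)) (hf : ∀ ω, f ω ≠ ⊤)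
    (hconv : ∀ ω, Tendsto (fun n => fs n ω) atTop (𝓝 (f ω)))
    {M : List X → EReal} {B : ℝ} (hB : ∀ t, B ≤ M t) {s : List X}
    (hdom : ∀ ω ∈ Gamma s, f ω ≤ liminfP M ω) {ε : ℝ} (hε : 0 < ε) {ω : ℕ → X}
    (hω : ω ∈ Gamma s) :
    ∃ k, s <+: pfx ω k ∧ ∀ᶠ n in atTop, ∀ ω' ∈ Gamma (pfx ω k), fs n ω' ≤ M (pfx ω k) + ε := by
  obtain ⟨n, hfreq⟩ :=
    EReal.exists_frequently_le_add (hconv ω) (hf ω) (hdom ω hω) (fun k => hB _) hε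
  obtain ⟨m, hm⟩ := hfin n
  obtain ⟨k, hle, hk⟩ := (hfreq.and_eventually (eventually_ge_atTop (max m s.length))).exists
  refine ⟨k, prefix_pfx_of_mem_Gamma hω (le_of_max_le_right hk),
    (eventually_ge_atTop n).mono fun n' hn' ω' hω' => ?_⟩
  calc fs n' ω' ≤ fs n ω' := hanti ω' hn'
    _ = fs n ω := hm.eq_of_mem_Gamma (by simpa using le_of_max_le_left hk) hω' (mem_Gamma_pfx ω k)
    _ ≤ M (pfx ω k) + ε := hle

lemma exists_upExp_le_add [Finite X] [Nonempty X] (hQ : ∀ s, IsUpperExpectation (Q s))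
    (hfin : ∀ n, Finitary (fs n)) (hanti : ∀ ω, Antitone (fun n => fs n ω)) (hf : ∀ ω, f ω ≠ ⊤)
    (hconv : ∀ ω, Tendsto (fun n => fs n ω) atTop (𝓝 (f ω)))
    {M : List X → EReal} (hM : IsSupermartingale Q M) {B : ℝ} (hB : ∀ t, B ≤ M t)
    {s : List X} (hdom : ∀ ω ∈ Gamma s, f ω ≤ liminfP M ω) {ε : ℝ} (hε : 0 < ε) :
    ∃ n, upExp Q (fs n) s ≤ M s + ε := by
  obtain ⟨T, hTfin, hTgood, hcover⟩ := exists_finite_cover_Gamma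
    (P := fun u => s <+: u ∧ ∀ᶠ n in atTop, ∀ ω ∈ Gamma u, fs n ω ≤ M u + ε) fun ω hω =>
    exists_pfx_eventually_le_add hfin hanti hf hconv hB hdom hε hω
  obtain ⟨n, hn⟩ := ((Filter.eventually_all_finite hTfin).2 fun u hu => (hTgood u hu).2).exists
  obtain ⟨m, hm⟩ := hfin n
  exact ⟨n, upExp_le_of_cover hQ hm (hM.add_const hQ hB ε)
    (fun t => (hB t).trans (le_add_of_nonneg_right (by exact_mod_cast hε.le)))
    (fun u hu => (hTgood u hu).1) hcover hn⟩

end DownwardContinuity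

/-- downward continuity with respect to non-increasing sequences of finitary,
bounded above global variables. -/
theorem stmt17 {X : Type*} [Fintype X] [Nonempty X]
    (Q : List X → (X → EReal) → EReal) (hQ : ∀ s : List X, IsUpperExpectation (Q s))
    (s : List X) (fs : ℕ → (ℕ → X) → EReal)
    (hfin : ∀ n, Finitary (fs n))
    (habove : ∀ n, ∃ c : ℝ, ∀ ω, fs n ω ≤ (c : EReal))
    (hmono : ∀ n ω, fs (n + 1) ω ≤ fs n ω)
    (f : (ℕ → X) → EReal)
    (hconv : ∀ ω, Tendsto (fun n => fs n ω) atTop (𝓝 (f ω))) :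
    Tendsto (fun n => upExp Q (fs n) s) atTop (𝓝 (upExp Q f s)) := by
  have hanti : ∀ ω, Antitone (fun n => fs n ω) := fun ω =>
    antitone_nat_of_succ_le fun n => hmono n ω
  have hf_le : ∀ n ω, f ω ≤ fs n ω := fun n ω => (hanti ω).le_of_tendsto (hconv ω) n
  have hf : ∀ ω, f ω ≠ ⊤ := fun ω =>
    have ⟨c, hc⟩ := habove 0
    ne_top_of_le_ne_top (EReal.coe_ne_top c) ((hf_le 0 ω).trans (hc ω))
  have hupExp_anti : Antitone (fun n => upExp Q (fs n) s) := fun n k hnk =>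
    upExp_mono (fun ω => hanti ω hnk) s
  suffices h : ⨅ n, upExp Q (fs n) s = upExp Q f s from h ▸ tendsto_atTop_iInf hupExp_anti
  refine le_antisymm (le_sInf ?_) (le_iInf fun n => upExp_mono (hf_le n) s)
  rintro _ ⟨M, hM, ⟨B, hB⟩, hdom, rfl⟩
  refine EReal.le_of_forall_pos_le_add fun ε hε => ?_
  obtain ⟨n, hn⟩ := exists_upExp_le_add hQ hfin hanti hf hconv hM hB hdom hε
  exact (iInf_le _ n).trans hn
end
end

section
/- For every global gamble f on Ω and every situation s: E_V(f|s) = inf{ M(s) : M a real-valued bounded below supermartingale with liminf M ≥_s f } = inf{ M(s) : M a real-valued supermartingale bounded both below and above, with liminf M ≥_s f }. -/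
open Filter Topology

noncomputable section

/-- Truncating a bounded-below supermartingale above at a real constant yields a real-valued
bounded supermartingale, preserving the liminf domination of a gamble bounded by `C`. -/
theorem trunc_super {X : Type*} [Fintype X] [Nonempty X]
    (Q : List X → (X → EReal) → EReal) (hQ : ∀ s : List X, IsUpperExpectation (Q s))
    (f : (ℕ → X) → ℝ) (s : List X)
    (M : List X → EReal) (hM : IsSupermartingale Q M)
    (B' : ℝ) (hB' : ∀ t, (B' : EReal) ≤ M t)
    (hlim : ∀ ω ∈ Gamma s, (f ω : EReal) ≤ liminfP M ω)
    (C : ℝ) (hC : ∀ ω, f ω ≤ C) :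
    ∃ M' : List X → ℝ, IsSupermartingale Q (fun t => (M' t : EReal)) ∧
      (∀ t, min B' C ≤ M' t) ∧ (∀ t, M' t ≤ C) ∧
      (∀ ω ∈ Gamma s, (f ω : EReal) ≤ liminfP (fun t => (M' t : EReal)) ω) ∧
      (M' s : EReal) = min (M s) (C : EReal) := by
  set M' : List X → ℝ := fun t => (min (M t) (C : EReal)).toReal with hM'def
  have hlow : ∀ t, ((min B' C : ℝ) : EReal) ≤ min (M t) (C : EReal) := by
    intro t
    refine le_min ?_ ?_
    · exact le_trans (by exact_mod_cast min_le_left B' C) (hB' t)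
    · exact_mod_cast min_le_right B' C
  have e : ∀ t, ((M' t : ℝ) : EReal) = min (M t) (C : EReal) := by
    intro t
    apply EReal.coe_toReal
    · exact ne_top_of_le_ne_top (EReal.coe_ne_top C) (min_le_right _ _)
    · exact ne_bot_of_le_ne_bot (EReal.coe_ne_bot _) (hlow t)
  refine ⟨M', ?_, ?_, ?_, ?_, e s⟩
  · -- supermartingale
    intro t
    obtain ⟨h1, h2, h3, h4, h5⟩ := hQ t
    simp only [e]
    refine le_min ?_ ?_
    · refine le_trans (h4 _ _ ⟨min B' C, fun x => hlow _⟩ ⟨B', fun x => hB' _⟩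
        (fun x => min_le_left _ _)) (hM t)
    · calc Q t (fun x => min (M (t ++ [x])) (C : EReal))
          ≤ Q t (fun _ => (C : EReal)) := by
            exact h4 _ _ ⟨min B' C, fun x => hlow _⟩ ⟨C, fun _ => le_rfl⟩
              (fun x => min_le_right _ _)
        _ = (C : EReal) := h1 C
  · intro t
    have := hlow t
    rw [← e t] at this
    exact_mod_cast this
  · intro t
    have : ((M' t : ℝ) : EReal) ≤ (C : EReal) := (e t) ▸ min_le_right _ _
    exact_mod_cast this
  · intro ω hω
    unfold liminfP
    simp only [e]
    rw [le_liminf_iff]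
    intro b hb
    have hbc : b < (C : EReal) := lt_of_lt_of_le hb (by exact_mod_cast hC ω)
    have h1 : b < liminfP M ω := lt_of_lt_of_le hb (hlim ω hω)
    have h1' : b < liminf (fun n => M (pfx ω n)) atTop := h1
    filter_upwards [eventually_lt_of_lt_liminf h1'] with n hn
    exact lt_min hn hbc


/-- on global gambles, the game-theoretic upper expectation coincides with the
versions defined via real-valued bounded below supermartingales, and via real-valued
supermartingales that are bounded both below and above. -/
theorem stmt19 {X : Type*} [Fintype X] [Nonempty X]
    (Q : List X → (X → EReal) → EReal) (hQ : ∀ s : List X, IsUpperExpectation (Q s))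
    (f : (ℕ → X) → ℝ) (hf : ∃ B : ℝ, ∀ ω, |f ω| ≤ B) (s : List X) :
    upExp Q (fun ω => (f ω : EReal)) s =
      sInf {x : EReal | ∃ M : List X → ℝ,
        IsSupermartingale Q (fun t => (M t : EReal)) ∧ (∃ B : ℝ, ∀ t, B ≤ M t) ∧
        (∀ ω ∈ Gamma s, (f ω : EReal) ≤ liminfP (fun t => (M t : EReal)) ω) ∧
        (M s : EReal) = x} ∧
    upExp Q (fun ω => (f ω : EReal)) s =
      sInf {x : EReal | ∃ M : List X → ℝ,
        IsSupermartingale Q (fun t => (M t : EReal)) ∧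
        (∃ B : ℝ, ∀ t, B ≤ M t) ∧ (∃ C : ℝ, ∀ t, M t ≤ C) ∧
        (∀ ω ∈ Gamma s, (f ω : EReal) ≤ liminfP (fun t => (M t : EReal)) ω) ∧
        (M s : EReal) = x} := by
  obtain ⟨B, hB⟩ := hf
  have hCf : ∀ ω, f ω ≤ B := fun ω => (abs_le.mp (hB ω)).2
  set S1 : Set EReal := {x : EReal | ∃ M : List X → ℝ,
        IsSupermartingale Q (fun t => (M t : EReal)) ∧ (∃ B : ℝ, ∀ t, B ≤ M t) ∧
        (∀ ω ∈ Gamma s, (f ω : EReal) ≤ liminfP (fun t => (M t : EReal)) ω) ∧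
        (M s : EReal) = x} with hS1
  set S2 : Set EReal := {x : EReal | ∃ M : List X → ℝ,
        IsSupermartingale Q (fun t => (M t : EReal)) ∧
        (∃ B : ℝ, ∀ t, B ≤ M t) ∧ (∃ C : ℝ, ∀ t, M t ≤ C) ∧
        (∀ ω ∈ Gamma s, (f ω : EReal) ≤ liminfP (fun t => (M t : EReal)) ω) ∧
        (M s : EReal) = x} with hS2
  have key : sInf S2 ≤ upExp Q (fun ω => (f ω : EReal)) s := by
    refine le_sInf ?_
    rintro x ⟨M, hM, ⟨B', hB'⟩, hlim, rfl⟩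
    by_cases htop : M s = ⊤
    · rw [htop]; exact le_top
    · have hne1 : M s ≠ ⊥ := ne_bot_of_le_ne_bot (EReal.coe_ne_bot B') (hB' s)
      set C := max B (M s).toReal with hCdef
      obtain ⟨M', h1, h2, h3, h4, h5⟩ := trunc_super Q hQ f s M hM B' hB' hlim C
        (fun ω => le_trans (hCf ω) (le_max_left _ _))
      have hMs : min (M s) (C : EReal) = M s := min_eq_left (by
        calc M s = ((M s).toReal : EReal) := (EReal.coe_toReal htop hne1).symm
          _ ≤ (C : EReal) := by exact_mod_cast le_max_right B (M s).toReal)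
      exact sInf_le ⟨M', h1, ⟨min B' C, h2⟩, ⟨C, h3⟩, h4, by rw [h5, hMs]⟩
  have h01 : upExp Q (fun ω => (f ω : EReal)) s ≤ sInf S1 := by
    refine sInf_le_sInf ?_
    rintro x ⟨M, h1, ⟨B', h2⟩, h3, h4⟩
    exact ⟨fun t => (M t : EReal), h1, ⟨B', fun t => by show (B':EReal) ≤ (M t : EReal); exact_mod_cast h2 t⟩, h3, h4⟩
  have h12 : sInf S1 ≤ sInf S2 := by
    refine sInf_le_sInf ?_
    rintro x ⟨M, h1, h2, _, h4, h5⟩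
    exact ⟨M, h1, h2, h4, h5⟩
  exact ⟨le_antisymm h01 (h12.trans key), le_antisymm (h01.trans h12) key⟩
end
end
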